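/- With the seven-dimensional vectors of Table S1: ∑_{i=1}^{4} (ψ · v_i)² = 1, ∑_{i=5}^{8} (ψ · v_i)² = 1, ∑_{i=9}^{12} (ψ · v_i)² = 1, and ∑_{i=13}^{16} (ψ · v_i)² = 1; consequently ∑_{i=1}^{16} (ψ · v_i)² = 4. (This is the quantum realization in dimension 7 of the Hardy-type paradox with success probability 1, attaining the quantum maximum μ₃ = 4 of the noncontextuality inequality whose noncontextual bound is 3.) -/

import Mathlib

noncomputable section

/-- a = 1/2 -/
def ra : ℝ := 1 / 2

/-- b = 1/√2 -/
def rb : ℝ := 1 / Real.sqrt 2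

/-- c = 1/(2√2) -/
def rc : ℝ := 1 / (2 * Real.sqrt 2)

/-- The sixteen seven-dimensional rays v₁,…,v₁₆ of Table S1
(indexed by `Fin 16`, so `ray7 k` is v_{k+1}). -/
def ray7 : Fin 16 → Fin 7 → ℝ :=
  ![![1, 0, 0, 0, 0, 0, 0],
    ![0, 1, 0, 0, 0, 0, 0],
    ![0, 0, 1, 0, 0, 0, 0],
    ![0, 0, 0, 1, 0, 0, 0],
    ![0, 0, ra, ra, 0, rb, 0],
    ![0, 0, ra, ra, 0, -rb, 0],
    ![ra, ra, 0, 0, rb, 0, 0],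
    ![ra, ra, 0, 0, -rb, 0, 0],
    ![ra, 0, ra, 0, rc, -rc, ra],
    ![0, ra, 0, ra, -rc, rc, ra],
    ![ra, 0, ra, 0, -rc, rc, -ra],
    ![0, ra, 0, ra, rc, -rc, -ra],
    ![ra, 0, 0, ra, rc, rc, -ra],
    ![0, ra, ra, 0, -rc, -rc, -ra],
    ![0, ra, ra, 0, rc, rc, ra],
    ![ra, 0, 0, ra, -rc, -rc, ra]]

/-- The initial state ψ = (1/2)(1,1,1,1,0,0,0) of Table S1. -/
def psi7 : Fin 7 → ℝ := ![ra, ra, ra, ra, 0, 0, 0]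

/-- Euclidean inner product on ℝ⁷. -/
def dot7 (u w : Fin 7 → ℝ) : ℝ := ∑ k, u k * w k

/-! ψ is supported on the first four coordinates, and on those coordinates every ray vᵢ
restricts to `e_k` or to `a (e_k + e_l)`; hence ψ · vᵢ = 1/2 for all sixteen rays, each
probability (ψ · vᵢ)² is 1/4, and each context of four rays sums to 1. -/

lemma dot7_psi7_ray7 (i : Fin 16) : dot7 psi7 (ray7 i) = 1 / 2 := by
  fin_cases i <;> simp [dot7, psi7, ray7, ra, Fin.sum_univ_seven] <;> norm_num

/-- Quantum realization in dimension 7 of the Hardy-type paradox with success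
probability 1: each of the four contexts sums to probability 1 on ψ, so the
total attains the quantum maximum μ₃ = 4 (> noncontextual bound 3). -/
theorem rays_hardy_success_probability_one :
    (dot7 psi7 (ray7 0) ^ 2 + dot7 psi7 (ray7 1) ^ 2
      + dot7 psi7 (ray7 2) ^ 2 + dot7 psi7 (ray7 3) ^ 2 = 1) ∧
    (dot7 psi7 (ray7 4) ^ 2 + dot7 psi7 (ray7 5) ^ 2
      + dot7 psi7 (ray7 6) ^ 2 + dot7 psi7 (ray7 7) ^ 2 = 1) ∧
    (dot7 psi7 (ray7 8) ^ 2 + dot7 psi7 (ray7 9) ^ 2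
      + dot7 psi7 (ray7 10) ^ 2 + dot7 psi7 (ray7 11) ^ 2 = 1) ∧
    (dot7 psi7 (ray7 12) ^ 2 + dot7 psi7 (ray7 13) ^ 2
      + dot7 psi7 (ray7 14) ^ 2 + dot7 psi7 (ray7 15) ^ 2 = 1) ∧
    (∑ i : Fin 16, dot7 psi7 (ray7 i) ^ 2 = 4) := by
  simp only [dot7_psi7_ray7, Finset.sum_const, Finset.card_univ, Fintype.card_fin, nsmul_eq_mul]
  norm_num
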